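/- arXiv:1604.04799 — 6 statements merged into one kernel-verified Lean document; each statement's English description precedes it below -/
import Mathlib

section
/- Let p_1 ≤ ... ≤ p_k be in [0,1]. If T is a probability distribution on {1,2}^k with marginals Pr[T_i = 1] = p_i such that for every nonempty subset I ⊆ {1,...,k}, Pr[T_i = 1 for all i ∈ I] = min_{i∈I} p_i and Pr[T_i = 2 for all i ∈ I] = min_{i∈I}(1-p_i), then T assigns mass p_1 to (1,...,1), mass p_{l+1}-p_l to the vector with l leading 2's followed by 1's for 1 ≤ l ≤ k-1, mass 1-p_k to (2,...,2), and mass 0 to every other vector in {1,2}^k. -/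
/-!
For `i ≤ j`, `Pr[T_i = 1, T_j = 2] = Pr[T_i = 1] - Pr[T_i = T_j = 1] = p_i - min p_i p_j = 0`,
so `T` is supported on the vectors that are antitone in the encoding `0 ↦ 1`, `1 ↦ 2`, which are
exactly the threshold vectors `vecT k m`. On these, the event "all coordinates from `m` on equal
`1`" is `{vecT k l | l ≤ m}`, of probability `p_m` (or `1` when `m = k`), so the mass of
`vecT k m` is the difference of two consecutive such probabilities.
-/

open Finset

/-- Threshold vector in `{1,2}^k` (`0` encodes the value "1", `1` encodes "2"):
`l` leading 2's followed by 1's. -/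
def vecT (k l : ℕ) : Fin k → Fin 2 := fun i => if (i : ℕ) < l then 1 else 0

/-- The "staircase" distribution on `{1,2}^k` determined by sorted marginal
probabilities `p 0 ≤ … ≤ p (k-1)`. -/
noncomputable def stair (k : ℕ) (p : Fin k → ℝ) : (Fin k → Fin 2) → ℝ :=
  fun x => ∑ l : Fin (k + 1),
    if x = vecT k (l : ℕ) then
      (if h : (l : ℕ) < k then p ⟨(l : ℕ), h⟩ else 1)
        - (if h : (l : ℕ) ≠ 0 then p ⟨(l : ℕ) - 1, by have := l.isLt; omega⟩ else 0)
    else 0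

/-- The probability, under the joint distribution `T` on `{1,2}^k`, that all
coordinates in `I` equal `v`. -/
noncomputable def prAll (k : ℕ) (T : (Fin k → Fin 2) → ℝ) (I : Finset (Fin k))
    (v : Fin 2) : ℝ :=
  ∑ x : Fin k → Fin 2, if ∀ i ∈ I, x i = v then T x else 0

/-- `T` is a multimaximal coupling of binary random variables with 1-probabilities
`p i`: it is a probability distribution and, for every nonempty index set `I`, the
probability that all coordinates in `I` equal "1" is `min_{i∈I} p i` and the
probability that all equal "2" is `min_{i∈I} (1 - p i)` (the maximal values
attainable by any coupling). Taking `I` a singleton gives the marginal conditions. -/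
def IsMultimax (k : ℕ) (p : Fin k → ℝ) (T : (Fin k → Fin 2) → ℝ) : Prop :=
  (∀ x, 0 ≤ T x) ∧ (∑ x : Fin k → Fin 2, T x = 1) ∧
    ∀ I : Finset (Fin k), ∀ hI : I.Nonempty,
      prAll k T I 0 = I.inf' hI p ∧ prAll k T I 1 = I.inf' hI (fun i => 1 - p i)

variable {k : ℕ}

def coordsFrom (k m : ℕ) : Finset (Fin k) := {i | m ≤ (i : ℕ)}

lemma antitone_vecT (k l : ℕ) : Antitone (vecT k l) := by
  intro i j hij
  simp only [vecT]
  split_ifs <;> first | exact le_rfl | exact Fin.zero_le _ | (rw [Fin.le_def] at hij; omega)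

lemma vecT_inj {a b : ℕ} (ha : a ≤ k) (hb : b ≤ k) : vecT k a = vecT k b ↔ a = b := by
  refine ⟨fun h => ?_, congrArg _⟩
  by_contra hne
  rcases Nat.lt_or_gt_of_ne hne with hlt | hlt
  · simpa [vecT, hlt] using congrFun h ⟨a, by omega⟩
  · simpa [vecT, hlt] using congrFun h ⟨b, by omega⟩

lemma exists_eq_vecT_of_antitone {x : Fin k → Fin 2} (hx : Antitone x) :
    ∃ m ≤ k, x = vecT k m := by
  by_cases h : ∃ i, x i = 0
  · obtain ⟨i₀, hi₀, hmin⟩ :=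
      (univ.filter (x · = 0)).exists_min_image id (by simpa [Finset.filter_nonempty_iff] using h)
    simp only [mem_filter, mem_univ, true_and, id] at hi₀ hmin
    refine ⟨i₀, i₀.isLt.le, funext fun i => ?_⟩
    by_cases hi : (i : ℕ) < i₀
    · have : x i ≠ 0 := fun h0 => absurd (hmin i h0) (not_le.2 hi)
      rw [vecT, if_pos hi]
      omega
    · have := hx (not_lt.1 hi : i₀ ≤ i)
      rw [hi₀] at this
      rw [vecT, if_neg hi]
      exact Fin.le_zero_iff.1 this
  · simp only [not_exists] at h
    exact ⟨k, le_rfl, funext fun i => by simp only [vecT, if_pos i.isLt]; have := h i; omega⟩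

lemma stair_vecT (p : Fin k → ℝ) {m : ℕ} (hm : m ≤ k) :
    stair k p (vecT k m) =
      (if h : m < k then p ⟨m, h⟩ else 1) - (if h : m ≠ 0 then p ⟨m - 1, by omega⟩ else 0) := by
  rw [stair, Finset.sum_eq_single ⟨m, by omega⟩]
  · simp
  · intro l _ hl
    rw [if_neg]
    exact fun h => hl (Fin.ext ((vecT_inj hm (by omega)).1 h).symm)
  · simp

lemma stair_eq_zero_of_not_antitone (p : Fin k → ℝ) {x : Fin k → Fin 2} (hx : ¬Antitone x) :
    stair k p x = 0 :=
  Finset.sum_eq_zero fun l _ => if_neg fun h : x = vecT k l => hx (h ▸ antitone_vecT k l)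

lemma prAll_sub_prAll_insert (T : (Fin k → Fin 2) → ℝ) (I : Finset (Fin k)) (j : Fin k)
    (v : Fin 2) :
    prAll k T I v - prAll k T (insert j I) v
      = ∑ x : Fin k → Fin 2, if (∀ i ∈ I, x i = v) ∧ x j ≠ v then T x else 0 := by
  rw [prAll, prAll, ← Finset.sum_sub_distrib]
  refine Finset.sum_congr rfl fun x _ => ?_
  simp only [Finset.forall_mem_insert]
  by_cases hj : x j = v <;> by_cases hI : ∀ i ∈ I, x i = v <;> simp [hj, hI]

lemma apply_vecT_zero (T : (Fin k → Fin 2) → ℝ) :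
    T (vecT k 0) = prAll k T (coordsFrom k 0) 0 := by
  rw [prAll, Finset.sum_eq_single (vecT k 0)]
  · simp [vecT]
  · intro y _ hy
    rw [if_neg]
    exact fun h => hy (funext fun i => by simpa [vecT, coordsFrom] using h i)
  · simp

section Multimax

variable {p : Fin k → ℝ} {T : (Fin k → Fin 2) → ℝ}

lemma apply_eq_zero_of_le (hmono : Monotone p) (hnn : ∀ x, 0 ≤ T x)
    (hmm : ∀ I : Finset (Fin k), ∀ hI : I.Nonempty, prAll k T I 0 = I.inf' hI p)
    {x : Fin k → Fin 2} {i j : Fin k} (hij : i ≤ j) (hi : x i = 0) (hj : x j ≠ 0) : T x = 0 := by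
  have hzero :
      ∑ y : Fin k → Fin 2, (if (∀ i' ∈ ({i} : Finset (Fin k)), y i' = 0) ∧ y j ≠ 0
        then T y else 0) = 0 := by
    rw [← prAll_sub_prAll_insert, hmm _ (singleton_nonempty i), hmm _ (insert_nonempty j {i}),
      inf'_insert (H := singleton_nonempty i), inf'_singleton, inf_eq_right.2 (hmono hij),
      sub_self]
  have := (Finset.sum_eq_zero_iff_of_nonneg fun y _ => ?_).1 hzero x (mem_univ x)
  · simpa [hi, hj] using this
  · split_ifs
    exacts [hnn y, le_rfl]

lemma apply_eq_zero_of_not_antitone (hmono : Monotone p) (hnn : ∀ x, 0 ≤ T x)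
    (hmm : ∀ I : Finset (Fin k), ∀ hI : I.Nonempty, prAll k T I 0 = I.inf' hI p)
    {x : Fin k → Fin 2} (hx : ¬Antitone x) : T x = 0 := by
  obtain ⟨i, j, hij, hlt⟩ : ∃ i j, i ≤ j ∧ x i < x j := by simpa [Antitone] using hx
  exact apply_eq_zero_of_le hmono hnn hmm hij (by omega) (by omega)

lemma prAll_coordsFrom (hmono : Monotone p) (hsum : ∑ x : Fin k → Fin 2, T x = 1)
    (hmm : ∀ I : Finset (Fin k), ∀ hI : I.Nonempty, prAll k T I 0 = I.inf' hI p) (m : ℕ) :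
    prAll k T (coordsFrom k m) 0 = if h : m < k then p ⟨m, h⟩ else 1 := by
  split_ifs with h
  · have hne : (coordsFrom k m).Nonempty := ⟨⟨m, h⟩, by simp [coordsFrom]⟩
    rw [hmm _ hne]
    refine le_antisymm (inf'_le _ (by simp [coordsFrom])) (le_inf' _ _ fun i hi => hmono ?_)
    simpa [coordsFrom, Fin.le_def] using hi
  · have : coordsFrom k m = ∅ := by ext i; simp [coordsFrom]; omega
    simp [prAll, this, hsum]

lemma apply_vecT_succ (hmono : Monotone p) (hnn : ∀ x, 0 ≤ T x)
    (hmm : ∀ I : Finset (Fin k), ∀ hI : I.Nonempty, prAll k T I 0 = I.inf' hI p)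
    {m : ℕ} (hm : m < k) :
    T (vecT k (m + 1)) = prAll k T (coordsFrom k (m + 1)) 0 - prAll k T (coordsFrom k m) 0 := by
  have hinsert : coordsFrom k m = insert ⟨m, hm⟩ (coordsFrom k (m + 1)) := by
    ext i
    simp only [coordsFrom, mem_filter, mem_univ, true_and, mem_insert, Fin.ext_iff]
    omega
  rw [hinsert, prAll_sub_prAll_insert, Finset.sum_eq_single (vecT k (m + 1))]
  · simp [vecT, coordsFrom]
  -- any other vector of the event has a `0` somewhere before its `1` at position `m`
  · intro y _ hy
    split_ifs with hev
    · obtain ⟨htail, hm0⟩ := hev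
      obtain ⟨c, hc⟩ := Function.ne_iff.1 hy
      have hcm : (c : ℕ) < m := by
        by_contra hcm
        rcases (by omega : (c : ℕ) = m ∨ m + 1 ≤ c) with hcm | hcm
        · obtain rfl : c = ⟨m, hm⟩ := Fin.ext hcm
          simp only [vecT, Nat.lt_succ_self, if_true] at hc
          omega
        · simp only [vecT, if_neg (by omega : ¬(c : ℕ) < m + 1),
            htail c (by simpa [coordsFrom] using hcm)] at hc
          exact hc rfl
      have hyc : y c = 0 := by
        simp only [vecT, hcm.trans (Nat.lt_succ_self m), if_true] at hc
        omega
      exact apply_eq_zero_of_le hmono hnn hmm (i := c) (j := ⟨m, hm⟩)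
        (Fin.le_def.2 hcm.le) hyc hm0
    · rfl
  · simp

end Multimax

theorem stmt3_general (k : ℕ) (p : Fin k → ℝ) (hmono : Monotone p)
    (T : (Fin k → Fin 2) → ℝ)
    (hnn : ∀ x, 0 ≤ T x) (hsum : ∑ x : Fin k → Fin 2, T x = 1)
    (hmm : ∀ I : Finset (Fin k), ∀ hI : I.Nonempty,
      prAll k T I 0 = I.inf' hI p ∧ prAll k T I 1 = I.inf' hI (fun i => 1 - p i)) :
    T = stair k p := by
  have hmm₀ : ∀ I : Finset (Fin k), ∀ hI : I.Nonempty, prAll k T I 0 = I.inf' hI p :=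
    fun I hI => (hmm I hI).1
  funext x
  by_cases hx : Antitone x
  · obtain ⟨m, hm, rfl⟩ := exists_eq_vecT_of_antitone hx
    rw [stair_vecT p hm]
    cases m with
    | zero => simp [apply_vecT_zero, prAll_coordsFrom hmono hsum hmm₀]
    | succ m =>
      rw [apply_vecT_succ hmono hnn hmm₀ hm, prAll_coordsFrom hmono hsum hmm₀,
        prAll_coordsFrom hmono hsum hmm₀]
      simp [show m < k by omega]
  · rw [stair_eq_zero_of_not_antitone p hx, apply_eq_zero_of_not_antitone hmono hnn hmm₀ hx]

/-- a probability distribution on `{1,2}^k` satisfying all the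
multimaximality equalities (for sorted `p`) must be the staircase distribution. -/
theorem stmt3 (k : ℕ) (p : Fin k → ℝ) (hmono : Monotone p)
    (h0 : ∀ i, 0 ≤ p i) (h1 : ∀ i, p i ≤ 1)
    (T : (Fin k → Fin 2) → ℝ)
    (hnn : ∀ x, 0 ≤ T x) (hsum : ∑ x : Fin k → Fin 2, T x = 1)
    (hmm : ∀ I : Finset (Fin k), ∀ hI : I.Nonempty,
      prAll k T I 0 = I.inf' hI p ∧ prAll k T I 1 = I.inf' hI (fun i => 1 - p i)) :
    T = stair k p :=
  stmt3_general k p hmono T hnn hsum hmm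
end

section
/- For any k ≥ 2 binary ({1,2}-valued) random variables R^1,...,R^k with Pr[R^i=1]=p_i, there exists a multimaximal coupling of R^1,...,R^k, and it is unique (as a probability distribution on {1,2}^k). -/
open Finset

/-! ### Auxiliary material -/

noncomputable def massN (k : ℕ) (q : Fin k → ℝ) (l : ℕ) : ℝ :=
  (if h : l < k then q ⟨l, h⟩ else 1) -
  (if h : l - 1 < k then (if l = 0 then 0 else q ⟨l - 1, h⟩) else 1)

lemma sum_massN {k : ℕ} (q : Fin k → ℝ) (m : ℕ) (hm : m < k) :
    ∑ l ∈ Finset.range (m + 1), massN k q l = q ⟨m, hm⟩ := by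
  induction m with
  | zero => simp [massN, hm]
  | succ n ih =>
    rw [Finset.sum_range_succ, ih (by omega)]
    have h1 : n + 1 < k := hm
    have h2 : n + 1 - 1 < k := by omega
    simp only [massN, dif_pos h1, dif_pos h2, if_neg (Nat.succ_ne_zero n)]
    have : (⟨n + 1 - 1, h2⟩ : Fin k) = ⟨n, by omega⟩ := by ext; simp
    rw [this]
    ring

lemma sum_massN_all {k : ℕ} (hk : 0 < k) (q : Fin k → ℝ) :
    ∑ l ∈ Finset.range (k + 1), massN k q l = 1 := by
  have h := sum_massN q (k - 1) (by omega)
  rw [show k - 1 + 1 = k by omega] at h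
  rw [Finset.sum_range_succ, h]
  have h2 : k - 1 < k := by omega
  simp only [massN, dif_neg (lt_irrefl k), dif_pos h2, if_neg (by omega : k ≠ 0)]
  ring

lemma massN_nonneg {k : ℕ} (hk : 0 < k) (q : Fin k → ℝ) (hq : Monotone q)
    (hq0 : ∀ i, 0 ≤ q i) (hq1 : ∀ i, q i ≤ 1) (l : ℕ) (hl : l ≤ k) :
    0 ≤ massN k q l := by
  unfold massN
  have hl1 : l - 1 < k := by omega
  rw [dif_pos hl1]
  by_cases h0 : l = 0
  · subst h0
    rw [dif_pos hk, if_pos rfl]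
    simpa using hq0 _
  · rw [if_neg h0]
    by_cases hlk : l < k
    · rw [dif_pos hlk]
      have : (⟨l - 1, hl1⟩ : Fin k) ≤ ⟨l, hlk⟩ := by simp [Fin.mk_le_mk]
      linarith [hq this]
    · rw [dif_neg hlk]
      linarith [hq1 ⟨l - 1, hl1⟩]

lemma stair_eq {k : ℕ} (hk : 0 < k) (q : Fin k → ℝ) (x : Fin k → Fin 2) :
    stair k q x = ∑ l : Fin (k + 1), if x = vecT k (l : ℕ) then massN k q (l : ℕ) else 0 := by
  unfold stair massN
  refine Finset.sum_congr rfl fun l _ => ?_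
  by_cases h : x = vecT k (l : ℕ)
  · rw [if_pos h, if_pos h]
    congr 1
    have hl : (l : ℕ) - 1 < k := by have := l.isLt; omega
    rw [dif_pos hl]
    by_cases h0 : (l : ℕ) = 0
    · rw [dif_neg (by simpa using h0), if_pos h0]
    · rw [dif_pos h0, if_neg h0]
  · rw [if_neg h, if_neg h]

lemma prAll_stair {k : ℕ} (hk : 0 < k) (q : Fin k → ℝ) (J : Finset (Fin k)) (v : Fin 2) :
    prAll k (stair k q) J v
      = ∑ l ∈ Finset.range (k + 1),
          if (∀ i ∈ J, vecT k l i = v) then massN k q l else 0 := by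
  unfold prAll
  have h1 : ∀ x : Fin k → Fin 2,
      (if ∀ i ∈ J, x i = v then stair k q x else 0)
        = ∑ l : Fin (k + 1),
            if x = vecT k (l : ℕ) then
              (if ∀ i ∈ J, vecT k (l : ℕ) i = v then massN k q (l : ℕ) else 0) else 0 := by
    intro x
    rw [stair_eq hk]
    split_ifs with h
    · refine Finset.sum_congr rfl fun l _ => ?_
      by_cases hx : x = vecT k (l : ℕ)
      · subst hx; rw [if_pos rfl, if_pos h, if_pos rfl]
      · rw [if_neg hx, if_neg hx]
    · symm
      refine Finset.sum_eq_zero fun l _ => ?_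
      by_cases hx : x = vecT k (l : ℕ)
      · subst hx; rw [if_pos rfl, if_neg h]
      · rw [if_neg hx]
  simp_rw [h1]
  rw [Finset.sum_comm]
  rw [← Fin.sum_univ_eq_sum_range
    (fun l => if (∀ i ∈ J, vecT k l i = v) then massN k q l else 0)]
  refine Finset.sum_congr rfl fun l _ => ?_
  rw [Finset.sum_ite_eq' Finset.univ (vecT k (l : ℕ))]
  simp

lemma vecT_zero_iff {k l : ℕ} {i : Fin k} : vecT k l i = 0 ↔ l ≤ (i : ℕ) := by
  unfold vecT; split <;> simp_all

lemma vecT_one_iff {k l : ℕ} {i : Fin k} : vecT k l i = 1 ↔ (i : ℕ) < l := by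
  unfold vecT; split <;> simp_all

lemma cond0 {k l : ℕ} {J : Finset (Fin k)} (hJ : J.Nonempty) :
    (∀ i ∈ J, vecT k l i = 0) ↔ l ≤ ((J.min' hJ : Fin k) : ℕ) := by
  simp_rw [vecT_zero_iff]
  constructor
  · intro h; exact h _ (J.min'_mem hJ)
  · intro h i hi
    exact le_trans h (by exact_mod_cast J.min'_le i hi)

lemma cond1 {k l : ℕ} {J : Finset (Fin k)} (hJ : J.Nonempty) :
    (∀ i ∈ J, vecT k l i = 1) ↔ ((J.max' hJ : Fin k) : ℕ) < l := by
  simp_rw [vecT_one_iff]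
  constructor
  · intro h; exact h _ (J.max'_mem hJ)
  · intro h i hi
    exact lt_of_le_of_lt (by exact_mod_cast J.le_max' i hi) h

lemma prAll_stair_zero {k : ℕ} (hk : 0 < k) (q : Fin k → ℝ) (J : Finset (Fin k))
    (hJ : J.Nonempty) : prAll k (stair k q) J 0 = q (J.min' hJ) := by
  rw [prAll_stair hk]
  set m : ℕ := ((J.min' hJ : Fin k) : ℕ) with hmdef
  have hm : m < k := (J.min' hJ).isLt
  have hcong : ∀ l ∈ Finset.range (k + 1),
      (if (∀ i ∈ J, vecT k l i = 0) then massN k q l else 0)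
        = if l ≤ m then massN k q l else 0 := by
    intro l _
    rw [if_congr (cond0 hJ) rfl rfl]
  rw [Finset.sum_congr rfl hcong, ← Finset.sum_filter]
  have hfil : (Finset.range (k + 1)).filter (· ≤ m) = Finset.range (m + 1) := by
    ext a; simp [Nat.lt_succ_iff]; omega
  rw [hfil, sum_massN q m hm]

lemma prAll_stair_one {k : ℕ} (hk : 0 < k) (q : Fin k → ℝ) (J : Finset (Fin k))
    (hJ : J.Nonempty) : prAll k (stair k q) J 1 = 1 - q (J.max' hJ) := by
  rw [prAll_stair hk]
  set M : ℕ := ((J.max' hJ : Fin k) : ℕ) with hMdef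
  have hM : M < k := (J.max' hJ).isLt
  have hcong : ∀ l ∈ Finset.range (k + 1),
      (if (∀ i ∈ J, vecT k l i = 1) then massN k q l else 0)
        = if M < l then massN k q l else 0 := by
    intro l _
    rw [if_congr (cond1 hJ) rfl rfl]
  rw [Finset.sum_congr rfl hcong, ← Finset.sum_filter]
  have hfil : (Finset.range (k + 1)).filter (M < ·) = Finset.Ico (M + 1) (k + 1) := by
    ext a; simp [Nat.lt_succ_iff]; omega
  rw [hfil, Finset.sum_Ico_eq_sub _ (by omega : M + 1 ≤ k + 1)]
  rw [sum_massN_all hk, sum_massN q M hM]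

lemma stair_sum_one {k : ℕ} (hk : 0 < k) (q : Fin k → ℝ) :
    ∑ x : Fin k → Fin 2, stair k q x = 1 := by
  have h := prAll_stair hk q ∅ (0 : Fin 2)
  unfold prAll at h
  simp only [Finset.notMem_empty, false_implies, implies_true, if_true] at h
  rw [h, sum_massN_all hk]

lemma stair_nonneg {k : ℕ} (hk : 0 < k) (q : Fin k → ℝ) (hq : Monotone q)
    (hq0 : ∀ i, 0 ≤ q i) (hq1 : ∀ i, q i ≤ 1) (x : Fin k → Fin 2) :
    0 ≤ stair k q x := by
  rw [stair_eq hk]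
  refine Finset.sum_nonneg fun l _ => ?_
  split
  · exact massN_nonneg hk q hq hq0 hq1 l (by have := l.isLt; omega)
  · exact le_refl 0

/-- `inf'` of a monotone function is attained at `min'`. -/
lemma inf'_monotone {k : ℕ} (q : Fin k → ℝ) (hq : Monotone q) (J : Finset (Fin k))
    (hJ : J.Nonempty) : J.inf' hJ q = q (J.min' hJ) := by
  refine le_antisymm (Finset.inf'_le _ (J.min'_mem hJ)) ?_
  exact Finset.le_inf' _ _ fun i hi => hq (J.min'_le i hi)

lemma inf'_one_sub_monotone {k : ℕ} (q : Fin k → ℝ) (hq : Monotone q) (J : Finset (Fin k))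
    (hJ : J.Nonempty) : J.inf' hJ (fun i => 1 - q i) = 1 - q (J.max' hJ) := by
  refine le_antisymm (Finset.inf'_le _ (J.max'_mem hJ)) ?_
  refine Finset.le_inf' _ _ fun i hi => ?_
  have := hq (J.le_max' i hi)
  linarith

lemma stair_multimax {k : ℕ} (hk : 0 < k) (q : Fin k → ℝ) (hq : Monotone q)
    (hq0 : ∀ i, 0 ≤ q i) (hq1 : ∀ i, q i ≤ 1) : IsMultimax k q (stair k q) := by
  refine ⟨stair_nonneg hk q hq hq0 hq1, stair_sum_one hk q, fun I hI => ?_⟩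
  rw [prAll_stair_zero hk q I hI, prAll_stair_one hk q I hI,
    inf'_monotone q hq I hI, inf'_one_sub_monotone q hq I hI]
  exact ⟨rfl, rfl⟩

/-! ### Existence via sorting -/

lemma exists_multimax {k : ℕ} (hk : 0 < k) (p : Fin k → ℝ)
    (h0 : ∀ i, 0 ≤ p i) (h1 : ∀ i, p i ≤ 1) :
    ∃ T : (Fin k → Fin 2) → ℝ, IsMultimax k p T := by
  classical
  set σ : Equiv.Perm (Fin k) := Tuple.sort p with hσ
  set q : Fin k → ℝ := p ∘ σ with hqdef
  have hq : Monotone q := Tuple.monotone_sort p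
  have hq0 : ∀ i, 0 ≤ q i := fun i => h0 _
  have hq1 : ∀ i, q i ≤ 1 := fun i => h1 _
  obtain ⟨hpos, hsum, hpr⟩ := stair_multimax hk q hq hq0 hq1
  set e : (Fin k → Fin 2) ≃ (Fin k → Fin 2) :=
    Equiv.arrowCongr σ.symm (Equiv.refl (Fin 2)) with hedef
  have he : ∀ x : Fin k → Fin 2, e x = x ∘ σ := by
    intro x; funext i; simp [hedef, Equiv.arrowCongr]
  refine ⟨fun x => stair k q (x ∘ σ), fun x => hpos _, ?_, ?_⟩
  · rw [Fintype.sum_equiv e (fun x => stair k q (x ∘ σ)) (fun y => stair k q y)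
      (fun x => by rw [he x])]
    exact hsum
  · intro I hI
    have hcond : ∀ x : Fin k → Fin 2,
        (∀ i ∈ I, x i = (0 : Fin 2)) ↔ (∀ j ∈ I.image σ.symm, (x ∘ σ) j = 0) := by
      intro x
      constructor
      · intro h j hj
        obtain ⟨i, hi, rfl⟩ := Finset.mem_image.1 hj
        simpa using h i hi
      · intro h i hi
        have := h (σ.symm i) (Finset.mem_image_of_mem _ hi)
        simpa using this
    have hcond1 : ∀ x : Fin k → Fin 2,
        (∀ i ∈ I, x i = (1 : Fin 2)) ↔ (∀ j ∈ I.image σ.symm, (x ∘ σ) j = 1) := by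
      intro x
      constructor
      · intro h j hj
        obtain ⟨i, hi, rfl⟩ := Finset.mem_image.1 hj
        simpa using h i hi
      · intro h i hi
        have := h (σ.symm i) (Finset.mem_image_of_mem _ hi)
        simpa using this
    have hIne : (I.image σ.symm).Nonempty := hI.image _
    have htrans : ∀ v : Fin 2,
        (∀ x : Fin k → Fin 2, ((∀ i ∈ I, x i = v) ↔ (∀ j ∈ I.image σ.symm, (x ∘ σ) j = v))) →
        prAll k (fun x => stair k q (x ∘ σ)) I v = prAll k (stair k q) (I.image σ.symm) v := by
      intro v hv
      unfold prAll
      refine Fintype.sum_equiv e _ _ fun x => ?_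
      rw [he x, if_congr (hv x) rfl rfl]
    obtain ⟨hz, ho⟩ := hpr (I.image σ.symm) hIne
    constructor
    · rw [htrans 0 hcond, hz]
      rw [Finset.inf'_image]
      exact Finset.inf'_congr hI rfl fun i hi => by simp [hqdef]
    · rw [htrans 1 hcond1, ho]
      rw [Finset.inf'_image]
      exact Finset.inf'_congr hI rfl fun i hi => by simp [hqdef]

/-! ### Uniqueness -/

def chiE (k : ℕ) : Finset (Fin k) ≃ (Fin k → Fin 2) where
  toFun A := fun i => if i ∈ A then 0 else 1
  invFun x := Finset.univ.filter (fun i => x i = 0)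
  left_inv A := by
    ext i
    simp only [Finset.mem_filter, Finset.mem_univ, true_and]
    by_cases h : i ∈ A <;> simp [h]
  right_inv x := by
    funext i
    have h2 : ∀ a : Fin 2, a ≠ 0 → a = 1 := by decide
    by_cases h : x i = 0 <;> simp [h]
    exact (h2 _ h).symm

lemma prAll_eq_sum {k : ℕ} (S : (Fin k → Fin 2) → ℝ) (A : Finset (Fin k)) :
    prAll k S A 0 = ∑ B : Finset (Fin k), if A ⊆ B then S (chiE k B) else 0 := by
  unfold prAll
  refine (Fintype.sum_equiv (chiE k) _ _ fun B => ?_).symm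
  have : (∀ i ∈ A, chiE k B i = 0) ↔ A ⊆ B := by
    constructor
    · intro h i hi
      have := h i hi
      simp only [chiE, Equiv.coe_fn_mk] at this
      by_contra hB
      rw [if_neg hB] at this
      exact absurd this (by decide)
    · intro h i hi
      simp only [chiE, Equiv.coe_fn_mk]
      rw [if_pos (h hi)]
  rw [if_congr this.symm rfl rfl]

lemma prAll_decomp {k : ℕ} (S : (Fin k → Fin 2) → ℝ) (A : Finset (Fin k)) :
    prAll k S A 0 = S (chiE k A)
      + ∑ B ∈ Finset.univ.erase A, (if A ⊆ B then S (chiE k B) else 0) := by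
  rw [prAll_eq_sum, ← Finset.add_sum_erase _ _ (Finset.mem_univ A), if_pos (subset_refl A)]

lemma multimax_unique {k : ℕ} (p : Fin k → ℝ) (T T' : (Fin k → Fin 2) → ℝ)
    (hT : IsMultimax k p T) (hT' : IsMultimax k p T') : T = T' := by
  classical
  have hf : ∀ A : Finset (Fin k), prAll k T A 0 = prAll k T' A 0 := by
    intro A
    rcases A.eq_empty_or_nonempty with rfl | hA
    · unfold prAll
      simp only [Finset.notMem_empty, false_implies, implies_true, if_true]
      rw [hT.2.1, hT'.2.1]
    · exact ((hT.2.2 A hA).1).trans ((hT'.2.2 A hA).1).symm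
  have key : ∀ n : ℕ, ∀ B : Finset (Fin k),
      (Finset.univ \ B).card ≤ n → T (chiE k B) = T' (chiE k B) := by
    intro n
    induction n with
    | zero =>
      intro B hB
      have hBuniv : B = Finset.univ := by
        have h0 : (Finset.univ \ B).card = 0 := Nat.le_zero.mp hB
        have h1 := Finset.card_eq_zero.mp h0
        apply Finset.eq_univ_of_forall
        intro i
        by_contra hi
        have : i ∈ Finset.univ \ B := Finset.mem_sdiff.mpr ⟨Finset.mem_univ i, hi⟩
        rw [h1] at this
        exact absurd this (Finset.notMem_empty i)
      subst hBuniv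
      have e1 := prAll_decomp T Finset.univ
      have e2 := prAll_decomp T' Finset.univ
      have hz : ∀ (S : (Fin k → Fin 2) → ℝ),
          ∑ C ∈ Finset.univ.erase (Finset.univ : Finset (Fin k)),
            (if Finset.univ ⊆ C then S (chiE k C) else 0) = 0 := by
        intro S
        refine Finset.sum_eq_zero fun C hC => ?_
        rw [if_neg]
        intro hsub
        exact (Finset.ne_of_mem_erase hC) ((Finset.univ_subset_iff.mp hsub))
      rw [hz T] at e1
      rw [hz T'] at e2
      have := hf Finset.univ
      rw [e1, e2] at this
      linarith
    | succ n ih =>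
      intro B hB
      have e1 := prAll_decomp T B
      have e2 := prAll_decomp T' B
      have hs : ∑ C ∈ Finset.univ.erase B, (if B ⊆ C then T (chiE k C) else 0)
          = ∑ C ∈ Finset.univ.erase B, (if B ⊆ C then T' (chiE k C) else 0) := by
        refine Finset.sum_congr rfl fun C hC => ?_
        by_cases hBC : B ⊆ C
        · rw [if_pos hBC, if_pos hBC]
          apply ih
          have hne : C ≠ B := Finset.ne_of_mem_erase hC
          have hss : B ⊂ C := Finset.ssubset_iff_subset_ne.mpr ⟨hBC, hne.symm⟩
          have hc1 : B.card < C.card := Finset.card_lt_card hss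
          have hc2 : C.card ≤ Fintype.card (Fin k) := Finset.card_le_univ C
          have hd1 : (Finset.univ \ B).card = Fintype.card (Fin k) - B.card := by
            rw [Finset.card_sdiff_of_subset (Finset.subset_univ B), Finset.card_univ]
          have hd2 : (Finset.univ \ C).card = Fintype.card (Fin k) - C.card := by
            rw [Finset.card_sdiff_of_subset (Finset.subset_univ C), Finset.card_univ]
          omega
        · rw [if_neg hBC, if_neg hBC]
      have := hf B
      rw [e1, e2, hs] at this
      linarith
  funext x
  have hx : x = chiE k ((chiE k).symm x) := ((chiE k).apply_symm_apply x).symm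
  rw [hx]
  exact key (Finset.univ \ (chiE k).symm x).card _ le_rfl

/-- for any `k ≥ 2` binary random variables with 1-probabilities `p i`,
a multimaximal coupling exists and is unique (as a distribution on `{1,2}^k`). -/
theorem stmt4 (k : ℕ) (hk : 2 ≤ k) (p : Fin k → ℝ)
    (h0 : ∀ i, 0 ≤ p i) (h1 : ∀ i, p i ≤ 1) :
    ∃! T : (Fin k → Fin 2) → ℝ, IsMultimax k p T := by
  obtain ⟨T, hT⟩ := exists_multimax (by omega : 0 < k) p h0 h1
  exact ⟨T, hT, fun T' hT' => multimax_unique p T' T hT' hT⟩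
end

section
/- Let R^1,...,R^k be binary random variables with Pr[R^i=1]=p_i and p_1 ≤ ... ≤ p_k. A coupling (T^1,...,T^k) of R^1,...,R^k is multimaximal if and only if for each i = 1,...,k-1, the pair (T^i, T^{i+1}) is a maximal coupling of (R^i, R^{i+1}), i.e., Pr[T^i = T^{i+1}] = 1 - |p_{i+1} - p_i|. -/
/-!
For sorted `p`, a coupling is multimaximal exactly when almost every outcome is a threshold
vector: "2" up to some index and "1" from there on. Given that, all coordinates in `I` equal
"1" iff the one of least index does, which has probability `p (min I) = min_{i ∈ I} p i`, and
dually for "2" with the largest index. Maximality of an adjacent pair `(i, i + 1)` is exactly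
what rules out the outcome "1" at `i` and "2" at `i + 1`, so adjacent maximality propagates to
the threshold shape. Conversely, in a multimaximal coupling any pair coincides with probability
`min (p i) (p j) + min (1 - p i) (1 - p j) = 1 - |p j - p i|`.
-/

open Finset

section WeightedEvents

variable {α : Type*} [Fintype α] (T : α → ℝ)

theorem sum_ite_and_add_sum_ite_and_not (P Q : α → Prop) [DecidablePred P] [DecidablePred Q] :
    (∑ x, if P x ∧ Q x then T x else 0) + (∑ x, if P x ∧ ¬Q x then T x else 0)
      = ∑ x, if P x then T x else 0 := by
  rw [← sum_add_distrib]
  refine sum_congr rfl fun x _ => ?_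
  by_cases hP : P x <;> by_cases hQ : Q x <;> simp [hP, hQ]

theorem sum_ite_add_sum_ite_not (P : α → Prop) [DecidablePred P] :
    (∑ x, if P x then T x else 0) + (∑ x, if ¬P x then T x else 0) = ∑ x, T x := by
  simpa using sum_ite_and_add_sum_ite_and_not T (fun _ => True) P

theorem sum_ite_or_of_disjoint {P Q : α → Prop} [DecidablePred P] [DecidablePred Q]
    (hPQ : ∀ x, ¬(P x ∧ Q x)) :
    (∑ x, if P x ∨ Q x then T x else 0)
      = (∑ x, if P x then T x else 0) + ∑ x, if Q x then T x else 0 := by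
  rw [← sum_add_distrib]
  refine sum_congr rfl fun x _ => ?_
  by_cases hP : P x <;> by_cases hQ : Q x <;> simp_all

theorem sum_ite_congr_of_ne_zero {P Q : α → Prop} [DecidablePred P] [DecidablePred Q]
    (h : ∀ x, T x ≠ 0 → (P x ↔ Q x)) :
    (∑ x, if P x then T x else 0) = ∑ x, if Q x then T x else 0 := by
  refine sum_congr rfl fun x _ => ?_
  by_cases hx : T x = 0
  · simp [hx]
  · simp only [h x hx]

/-- `1 - Pr[A ↔ B] = Pr[A ∧ ¬B] + Pr[¬A ∧ B]` while `Pr[B] - Pr[A] = Pr[¬A ∧ B] - Pr[A ∧ ¬B]`,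
so the hypothesis says `Pr[A ∧ ¬B] = 0`. -/
theorem imp_of_sum_ite_iff (hnn : ∀ x, 0 ≤ T x) (hsum : ∑ x, T x = 1)
    (A B : α → Prop) [DecidablePred A] [DecidablePred B]
    (h : (∑ x, if (A x ↔ B x) then T x else 0)
      = 1 - ((∑ x, if B x then T x else 0) - ∑ x, if A x then T x else 0))
    (x : α) (hx : T x ≠ 0) (hA : A x) : B x := by
  have hdefect : ∑ y, 2 * (if A y ∧ ¬B y then T y else 0)
      = ∑ y, (T y - (if (A y ↔ B y) then T y else 0) - (if B y then T y else 0)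
          + if A y then T y else 0) := by
    refine sum_congr rfl fun y _ => ?_
    by_cases hAy : A y <;> by_cases hBy : B y <;> simp [hAy, hBy, two_mul]
  rw [← mul_sum, sum_add_distrib, sum_sub_distrib, sum_sub_distrib, hsum, h] at hdefect
  have hzero : ∑ y, (if A y ∧ ¬B y then T y else 0) = 0 := by linarith
  by_contra hB
  have := (sum_eq_zero_iff_of_nonneg fun y _ => ?_).1 hzero x (mem_univ x)
  · exact hx (by simpa [hA, hB] using this)
  · split_ifs
    exacts [hnn y, le_rfl]

end WeightedEvents

theorem Fin.antitone_of_forall_succ_le {β : Type*} [Preorder β] {k : ℕ} {f : Fin k → β}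
    (h : ∀ (i : Fin k) (hi : (i : ℕ) + 1 < k), f ⟨i + 1, hi⟩ ≤ f i) : Antitone f := by
  cases k with
  | zero => exact fun i => i.elim0
  | succ n => exact Fin.antitone_iff_succ_le.2 fun i => h i.castSucc (by simp)

section MinMax

variable {ι β : Type*} [LinearOrder ι] {I : Finset ι} (hI : I.Nonempty)

theorem Monotone.finset_inf'_eq_min' [SemilatticeInf β] {f : ι → β} (hf : Monotone f) :
    I.inf' hI f = f (I.min' hI) :=
  le_antisymm (inf'_le _ (I.min'_mem hI)) (le_inf' _ _ fun _ hi => hf (I.min'_le _ hi))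

theorem Antitone.finset_inf'_eq_max' [SemilatticeInf β] {f : ι → β} (hf : Antitone f) :
    I.inf' hI f = f (I.max' hI) :=
  le_antisymm (inf'_le _ (I.max'_mem hI)) (le_inf' _ _ fun _ hi => hf (I.le_max' _ hi))

theorem Antitone.forall_mem_eq_bot_iff [PartialOrder β] [OrderBot β] {f : ι → β}
    (hf : Antitone f) : (∀ i ∈ I, f i = ⊥) ↔ f (I.min' hI) = ⊥ :=
  ⟨fun h => h _ (I.min'_mem hI), fun h i hi => le_bot_iff.1 (h ▸ hf (I.min'_le i hi))⟩

theorem Antitone.forall_mem_eq_top_iff [PartialOrder β] [OrderTop β] {f : ι → β}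
    (hf : Antitone f) : (∀ i ∈ I, f i = ⊤) ↔ f (I.max' hI) = ⊤ :=
  ⟨fun h => h _ (I.max'_mem hI), fun h i hi => top_le_iff.1 (h ▸ hf (I.le_max' i hi))⟩

end MinMax

theorem min_add_min_one_sub (a b : ℝ) : min a b + min (1 - a) (1 - b) = 1 - |b - a| := by
  rw [min_sub_sub_left, ← max_sub_min_eq_abs]
  ring

section Coupling

variable {k : ℕ} {T : (Fin k → Fin 2) → ℝ}

theorem prAll_singleton (i : Fin k) (v : Fin 2) :
    prAll k T {i} v = ∑ x, if x i = v then T x else 0 := by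
  simp [prAll]

theorem prAll_singleton_one (hsum : ∑ x, T x = 1) (i : Fin k) :
    prAll k T {i} 1 = 1 - prAll k T {i} 0 := by
  have hsplit := sum_ite_add_sum_ite_not T fun x => x i = 0
  have hne : ∀ u : Fin 2, ¬u = 0 ↔ u = 1 := by decide
  simp only [hne, hsum] at hsplit
  rw [prAll_singleton, prAll_singleton]
  linarith

theorem prAll_pair_zero_add_prAll_pair_one (i j : Fin k) :
    prAll k T {i, j} 0 + prAll k T {i, j} 1 = ∑ x, if x i = x j then T x else 0 := by
  have hfin : ∀ u v : Fin 2, (u = 0 ∧ v = 0) ∨ (u = 1 ∧ v = 1) ↔ u = v := by decide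
  rw [prAll, prAll, ← sum_ite_or_of_disjoint _ fun x h => ?_]
  · simp only [mem_insert, mem_singleton, forall_eq_or_imp, forall_eq, hfin]
  · have hi := mem_insert_self i {j}
    exact zero_ne_one ((h.1 i hi).symm.trans (h.2 i hi))

theorem prAll_zero_eq_min' (hT : ∀ x, T x ≠ 0 → Antitone x) {I : Finset (Fin k)}
    (hI : I.Nonempty) : prAll k T I 0 = prAll k T {I.min' hI} 0 := by
  rw [prAll_singleton]
  exact sum_ite_congr_of_ne_zero T fun x hx => (hT x hx).forall_mem_eq_bot_iff hI

theorem prAll_one_eq_max' (hT : ∀ x, T x ≠ 0 → Antitone x) {I : Finset (Fin k)}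
    (hI : I.Nonempty) : prAll k T I 1 = prAll k T {I.max' hI} 1 := by
  rw [prAll_singleton]
  exact sum_ite_congr_of_ne_zero T fun x hx => (hT x hx).forall_mem_eq_top_iff hI

theorem IsMultimax.sum_ite_eq_eq {p : Fin k → ℝ} (H : IsMultimax k p T) (i j : Fin k) :
    (∑ x, if x i = x j then T x else 0) = 1 - |p j - p i| := by
  obtain ⟨h0, h1⟩ := H.2.2 {i, j} (insert_nonempty i {j})
  rw [← prAll_pair_zero_add_prAll_pair_one, h0, h1, ← min_add_min_one_sub]
  simp [inf'_insert]

theorem apply_le_of_sum_ite_eq_eq {p : Fin k → ℝ} (hnn : ∀ x, 0 ≤ T x)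
    (hsum : ∑ x, T x = 1) (hmarg : ∀ i, prAll k T {i} 0 = p i) {i j : Fin k}
    (hij : p i ≤ p j) (hmax : (∑ x, if x i = x j then T x else 0) = 1 - |p j - p i|)
    (x : Fin k → Fin 2) (hx : T x ≠ 0) : x j ≤ x i := by
  have hfin : ∀ u v : Fin 2, (v = 0 → u = 0) → u ≤ v := by decide
  refine hfin _ _ (imp_of_sum_ite_iff T hnn hsum (fun x => x i = 0) (fun x => x j = 0) ?_ x hx)
  have hiff : ∀ u v : Fin 2, (u = 0 ↔ v = 0) ↔ u = v := by decide
  simp only [hiff, ← prAll_singleton, hmarg, hmax, abs_of_nonneg (sub_nonneg.2 hij)]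

theorem isMultimax_of_adjacent {p : Fin k → ℝ} (hmono : Monotone p) (hnn : ∀ x, 0 ≤ T x)
    (hsum : ∑ x, T x = 1) (hmarg : ∀ i, prAll k T {i} 0 = p i)
    (hadj : ∀ (i : Fin k) (h : (i : ℕ) + 1 < k),
      (∑ x, if x i = x ⟨i + 1, h⟩ then T x else 0) = 1 - |p ⟨i + 1, h⟩ - p i|) :
    IsMultimax k p T := by
  have hsupp : ∀ x, T x ≠ 0 → Antitone x := fun x hx =>
    Fin.antitone_of_forall_succ_le fun i hi =>
      apply_le_of_sum_ite_eq_eq hnn hsum hmarg (hmono (Nat.le_succ _)) (hadj i hi) x hx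
  refine ⟨hnn, hsum, fun I hI => ⟨?_, ?_⟩⟩
  · rw [prAll_zero_eq_min' hsupp hI, hmarg, hmono.finset_inf'_eq_min']
  · have hanti : Antitone fun i => 1 - p i := fun _ _ h => sub_le_sub_left (hmono h) 1
    rw [prAll_one_eq_max' hsupp hI, prAll_singleton_one hsum, hmarg,
      hanti.finset_inf'_eq_max']

end Coupling

theorem stmt5_general (k : ℕ) (p : Fin k → ℝ) (hmono : Monotone p)
    (T : (Fin k → Fin 2) → ℝ)
    (hnn : ∀ x, 0 ≤ T x) (hsum : ∑ x : Fin k → Fin 2, T x = 1)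
    (hmarg : ∀ i, prAll k T {i} 0 = p i) :
    IsMultimax k p T ↔
      ∀ i : Fin k, ∀ h : (i : ℕ) + 1 < k,
        (∑ x : Fin k → Fin 2, if x i = x ⟨(i : ℕ) + 1, h⟩ then T x else 0)
          = 1 - |p ⟨(i : ℕ) + 1, h⟩ - p i| :=
  ⟨fun H i _ => H.sum_ite_eq_eq i _, isMultimax_of_adjacent hmono hnn hsum hmarg⟩

/-- with `p` sorted, a coupling `T` of the binary variables is
multimaximal iff each adjacent pair `(T^i, T^{i+1})` is a maximal coupling, i.e.
`Pr[T^i = T^{i+1}] = 1 - |p (i+1) - p i|`. -/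
theorem stmt5 (k : ℕ) (p : Fin k → ℝ) (hmono : Monotone p)
    (h0 : ∀ i, 0 ≤ p i) (h1 : ∀ i, p i ≤ 1)
    (T : (Fin k → Fin 2) → ℝ)
    (hnn : ∀ x, 0 ≤ T x) (hsum : ∑ x : Fin k → Fin 2, T x = 1)
    (hmarg : ∀ i, prAll k T {i} 0 = p i) :
    IsMultimax k p T ↔
      ∀ i : Fin k, ∀ h : (i : ℕ) + 1 < k,
        (∑ x : Fin k → Fin 2, if x i = x ⟨(i : ℕ) + 1, h⟩ then T x else 0)
          = 1 - |p ⟨(i : ℕ) + 1, h⟩ - p i| :=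
  stmt5_general k p hmono T hnn hsum hmarg
end

section
/- Let (T^1,...,T^k) be a coupling of random variables R^1,...,R^k taking values in a common finite set V. If for all pairs c < c' in {1,...,k} the pair (T^c, T^{c'}) is a maximal coupling of (R^c, R^{c'}) (i.e., Pr[T^c = T^{c'} = v] = min(Pr[R^c = v], Pr[R^{c'} = v]) for every v ∈ V), then for every nonempty subset I ⊆ {1,...,k} and every v ∈ V, Pr[T^i = v for all i ∈ I] = min_{i∈I} Pr[R^i = v]; that is, (T^1,...,T^k) is a multimaximal coupling. -/
open Finset

/-- The probability, under the joint distribution `T` on `V^k`, that all coordinates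
in `I` equal `v`. -/
noncomputable def prAllV {V : Type*} [Fintype V] [DecidableEq V] (k : ℕ)
    (T : (Fin k → V) → ℝ) (I : Finset (Fin k)) (v : V) : ℝ :=
  ∑ x : Fin k → V, if ∀ i ∈ I, x i = v then T x else 0

/-- `T` is a multimaximal coupling of random variables `R^1,…,R^k` (valued in a common
finite set `V`, with point probabilities `μ i v = Pr[R^i = v]`): `T` is a probability
distribution on `V^k`, its marginals are the `μ i`, and for every nonempty index set
`I` and every value `v`, the probability that all coordinates in `I` equal `v` is
`min_{i∈I} μ i v` (the maximum attainable by any coupling). -/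
def IsMultimaxV {V : Type*} [Fintype V] [DecidableEq V] (k : ℕ)
    (μ : Fin k → V → ℝ) (T : (Fin k → V) → ℝ) : Prop :=
  (∀ x, 0 ≤ T x) ∧ (∑ x : Fin k → V, T x = 1) ∧
    (∀ i v, prAllV k T {i} v = μ i v) ∧
    ∀ I : Finset (Fin k), ∀ hI : I.Nonempty, ∀ v : V,
      prAllV k T I v = I.inf' hI (fun i => μ i v)

/-- if every pair of coordinates of the coupling `T` is a maximal
coupling of the corresponding pair (i.e. `Pr[T^c = T^{c'} = v] = min (μ c v) (μ c' v)`
for all `c < c'` and all `v`), then `T` is a multimaximal coupling: for every nonempty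
`I` and every `v`, `Pr[T^i = v for all i ∈ I] = min_{i∈I} μ i v`. -/
theorem stmt6 {V : Type*} [Fintype V] [DecidableEq V] (k : ℕ)
    (μ : Fin k → V → ℝ) (T : (Fin k → V) → ℝ)
    (hnn : ∀ x, 0 ≤ T x) (hsum : ∑ x : Fin k → V, T x = 1)
    (hmarg : ∀ i v, prAllV k T {i} v = μ i v)
    (hpair : ∀ c c' : Fin k, c < c' → ∀ v : V,
      (∑ x : Fin k → V, if x c = v ∧ x c' = v then T x else 0)
        = min (μ c v) (μ c' v)) :
    ∀ I : Finset (Fin k), ∀ hI : I.Nonempty, ∀ v : V,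
      prAllV k T I v = I.inf' hI (fun i => μ i v) := by

  intro I hI v
  obtain ⟨i₀, hi₀I, hmin⟩ := I.exists_min_image (fun i => μ i v) hI
  have hinf : I.inf' hI (fun i => μ i v) = μ i₀ v :=
    le_antisymm (inf'_le _ hi₀I) (le_inf' _ _ hmin)
  have hsing : (∑ x : Fin k → V, if x i₀ = v then T x else 0) = μ i₀ v := by
    rw [← hmarg i₀ v]; unfold prAllV
    exact Finset.sum_congr rfl fun x _ => by simp [Finset.mem_singleton]
  have key : ∀ j ∈ I, (∑ x : Fin k → V, if x i₀ = v ∧ x j = v then T x else 0) = μ i₀ v := by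
    intro j hj
    rcases lt_trichotomy i₀ j with h | h | h
    · rw [hpair i₀ j h v]; exact min_eq_left (hmin j hj)
    · subst h; rw [← hsing]; exact Finset.sum_congr rfl fun x _ => by simp
    · calc (∑ x : Fin k → V, if x i₀ = v ∧ x j = v then T x else 0)
          = ∑ x : Fin k → V, if x j = v ∧ x i₀ = v then T x else 0 :=
            Finset.sum_congr rfl fun x _ => if_congr and_comm rfl rfl
        _ = min (μ j v) (μ i₀ v) := hpair j i₀ h v
        _ = μ i₀ v := min_eq_right (hmin j hj)
  have zero : ∀ x, x i₀ = v → (¬ ∀ i ∈ I, x i = v) → T x = 0 := by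
    intro x hx hnot
    push_neg at hnot
    obtain ⟨j, hjI, hjv⟩ := hnot
    have hdiff : (∑ y : Fin k → V, if y i₀ = v ∧ y j ≠ v then T y else 0) = 0 := by
      have split : (∑ y : Fin k → V, if y i₀ = v then T y else 0)
          = (∑ y : Fin k → V, if y i₀ = v ∧ y j = v then T y else 0)
            + (∑ y : Fin k → V, if y i₀ = v ∧ y j ≠ v then T y else 0) := by
        rw [← Finset.sum_add_distrib]
        refine Finset.sum_congr rfl fun y _ => ?_
        by_cases h1 : y i₀ = v <;> by_cases h2 : y j = v <;> simp [h1, h2]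
      rw [hsing, key j hjI] at split; linarith
    have hz := (Finset.sum_eq_zero_iff_of_nonneg
      (fun y _ => by by_cases h : y i₀ = v ∧ y j ≠ v <;> simp [h, hnn y])).mp hdiff
      x (Finset.mem_univ x)
    simpa [hx, hjv] using hz
  unfold prAllV
  have heq : (∑ x : Fin k → V, if ∀ i ∈ I, x i = v then T x else 0)
      = ∑ x : Fin k → V, if x i₀ = v then T x else 0 := by
    refine Finset.sum_congr rfl fun x _ => ?_
    by_cases hall : ∀ i ∈ I, x i = v
    · rw [if_pos hall, if_pos (hall i₀ hi₀I)]
    · by_cases hx : x i₀ = v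
      · rw [if_neg hall, if_pos hx, zero x hx hall]
      · rw [if_neg hall, if_neg hx]
  rw [heq, hsing, hinf]
end

section
/- There exist three random variables R^1, R^2, R^3 taking values in {1,2,3}, with distributions Pr[R^1=2]=Pr[R^1=3]=1/2, Pr[R^2=1]=Pr[R^2=3]=1/2, Pr[R^3=1]=Pr[R^3=2]=1/2 (all other values probability 0), such that no multimaximal coupling of R^1,R^2,R^3 exists. -/
open Finset

/-- The distributions of Example 1: three `{1,2,3}`-valued variables (values encoded
as `Fin 3`), with `R^1` uniform on `{2,3}`, `R^2` uniform on `{1,3}`, `R^3` uniform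
on `{1,2}`. -/
noncomputable def mu7 : Fin 3 → Fin 3 → ℝ :=
  ![![0, 1/2, 1/2], ![1/2, 0, 1/2], ![1/2, 1/2, 0]]

/-- there exist three `{1,2,3}`-valued random variables with the stated
distributions admitting no multimaximal coupling. -/
theorem stmt7 :
    ∃ μ : Fin 3 → Fin 3 → ℝ, μ = mu7 ∧
      ¬ ∃ T : (Fin 3 → Fin 3) → ℝ, IsMultimaxV 3 μ T := by
  refine ⟨mu7, rfl, ?_⟩
  rintro ⟨T, hpos, hsum, _, hI⟩
  have hA := hI {0, 1} ⟨0, by simp⟩ 2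
  have hB := hI {0, 2} ⟨0, by simp⟩ 1
  have hC := hI {1, 2} ⟨1, by simp⟩ 0
  rw [show ({0,1} : Finset (Fin 3)).inf' ⟨0, by simp⟩ (fun i => mu7 i 2) = 1/2 by
    norm_num [Finset.inf'_insert, Finset.inf'_singleton, mu7, Matrix.cons_val_two,
      Matrix.tail_cons, Matrix.vecHead, Matrix.vecTail]] at hA
  rw [show ({0,2} : Finset (Fin 3)).inf' ⟨0, by simp⟩ (fun i => mu7 i 1) = 1/2 by
    norm_num [Finset.inf'_insert, Finset.inf'_singleton, mu7, Matrix.cons_val_two,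
      Matrix.tail_cons, Matrix.vecHead, Matrix.vecTail]] at hB
  rw [show ({1,2} : Finset (Fin 3)).inf' ⟨1, by simp⟩ (fun i => mu7 i 0) = 1/2 by
    norm_num [Finset.inf'_insert, Finset.inf'_singleton, mu7, Matrix.cons_val_two,
      Matrix.tail_cons, Matrix.vecHead, Matrix.vecTail]] at hC
  have key : prAllV 3 T {0,1} 2 + prAllV 3 T {0,2} 1 + prAllV 3 T {1,2} 0 ≤ 1 := by
    rw [← hsum]
    unfold prAllV
    rw [← Finset.sum_add_distrib, ← Finset.sum_add_distrib]
    apply Finset.sum_le_sum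
    intro x _
    have hx := hpos x
    split_ifs <;>
      first
        | linarith
        | simp_all [Finset.forall_mem_insert]
  rw [hA, hB, hC] at key
  norm_num at key
end

section
/- Let R^1,...,R^k be random variables valued in a common finite set V, and suppose a coupling (T^1,...,T^k) satisfies: for all pairs c < c', (T^c,T^{c'}) is a maximal coupling of (R^c,R^{c'}). Suppose for contradiction there is a value v ∈ V with Pr[T^1 = ... = T^k = v] < min_i Pr[R^i = v] while Pr[T^c = T^{c'} = v] = min(Pr[R^c=v], Pr[R^{c'}=v]) for all pairs. Then the binary variables obtained by mapping each T^c to 1 if T^c = v and to 2 otherwise form a coupling of binary variables that is pairwise maximal at every pair but not maximal on the full set, contradicting the pairwise characterization of multimaximality for binary variables. Conclude: pairwise maximality of all pairs implies multimaximality for arbitrary finite-valued variables. -/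
open Finset

/-- pairwise maximality of all pairs implies multimaximality for
arbitrary finite-valued variables: if a coupling `T` of `R^1,…,R^k` satisfies
`Pr[T^c = T^{c'} = v] = min (μ c v) (μ c' v)` for all pairs `c < c'` and all `v`
(each pair is a maximal coupling), then there can be no value `v` with
`Pr[T^1 = … = T^k = v] < min_i μ i v`; indeed for every nonempty subset `I` and
every `v`, `Pr[T^i = v for all i ∈ I] = min_{i∈I} μ i v`, i.e. `T` is multimaximal. -/
theorem stmt16 {V : Type*} [Fintype V] [DecidableEq V] (k : ℕ) (hk : 0 < k)
    (μ : Fin k → V → ℝ) (T : (Fin k → V) → ℝ)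
    (hnn : ∀ x, 0 ≤ T x) (hsum : ∑ x : Fin k → V, T x = 1)
    (hmarg : ∀ i v, prAllV k T {i} v = μ i v)
    (hpair : ∀ c c' : Fin k, c < c' → ∀ v : V,
      (∑ x : Fin k → V, if x c = v ∧ x c' = v then T x else 0)
        = min (μ c v) (μ c' v)) :
    (¬ ∃ v : V, (∑ x : Fin k → V, if ∀ i, x i = v then T x else 0)
        < (Finset.univ : Finset (Fin k)).inf'
            ⟨⟨0, hk⟩, Finset.mem_univ _⟩ (fun i => μ i v)) ∧
      IsMultimaxV k μ T := by
  have hmarg' : ∀ j v, (∑ x : Fin k → V, if x j = v then T x else 0) = μ j v := by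
    intro j v
    rw [← hmarg j v]
    exact (Finset.sum_congr rfl (fun x _ => by simp)).symm
  have hd : ∀ j i : Fin k, j ≠ i → ∀ v,
      (∑ x : Fin k → V, if x j = v ∧ x i = v then T x else 0) = min (μ j v) (μ i v) := by
    intro j i hne v
    rcases lt_or_gt_of_ne hne with h | h
    · exact hpair j i h v
    · rw [min_comm, ← hpair i j h v]
      exact Finset.sum_congr rfl (fun x _ => if_congr and_comm rfl rfl)
  have hzero : ∀ j i : Fin k, ∀ v, μ j v ≤ μ i v →
      ∀ x : Fin k → V, x j = v → x i ≠ v → T x = 0 := by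
    intro j i v hle x hxj hxi
    have hji : j ≠ i := fun h => hxi (h ▸ hxj)
    have hsplit : (∑ y : Fin k → V, if y j = v ∧ y i ≠ v then T y else 0)
        = (∑ y : Fin k → V, if y j = v then T y else 0)
          - (∑ y : Fin k → V, if y j = v ∧ y i = v then T y else 0) := by
      rw [← Finset.sum_sub_distrib]
      refine Finset.sum_congr rfl fun y _ => ?_
      by_cases h1 : y j = v <;> by_cases h2 : y i = v <;> simp [h1, h2]
    have h0 : (∑ y : Fin k → V, if y j = v ∧ y i ≠ v then T y else 0) = 0 := by
      rw [hsplit, hmarg', hd j i hji v, min_eq_left hle]; ring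
    have hnn' : ∀ y ∈ (Finset.univ : Finset (Fin k → V)),
        0 ≤ if y j = v ∧ y i ≠ v then T y else 0 := by
      intro y _; split
      · exact hnn y
      · exact le_refl 0
    have := (Finset.sum_eq_zero_iff_of_nonneg hnn').mp h0 x (Finset.mem_univ x)
    simpa [hxj, hxi] using this
  have key : ∀ I : Finset (Fin k), ∀ hI : I.Nonempty, ∀ v : V,
      prAllV k T I v = I.inf' hI (fun i => μ i v) := by
    intro I hI v
    obtain ⟨j, hjI, hj⟩ := Finset.exists_mem_eq_inf' hI (fun i => μ i v)
    have : prAllV k T I v = ∑ x : Fin k → V, if x j = v then T x else 0 := by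
      unfold prAllV
      refine Finset.sum_congr rfl fun x _ => ?_
      by_cases hall : ∀ i ∈ I, x i = v
      · rw [if_pos hall, if_pos (hall j hjI)]
      · push_neg at hall
        obtain ⟨i, hiI, hxi⟩ := hall
        by_cases hxj : x j = v
        · have hle : μ j v ≤ μ i v := hj ▸ Finset.inf'_le _ hiI
          have hT := hzero j i v hle x hxj hxi
          rw [if_neg (fun h => hxi (h i hiI)), if_pos hxj, hT]
        · rw [if_neg (fun h => hxi (h i hiI)), if_neg hxj]
    rw [this, hmarg', hj]
  constructor
  · rintro ⟨v, hv⟩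
    have h1 : (∑ x : Fin k → V, if ∀ i, x i = v then T x else 0)
        = prAllV k T Finset.univ v := by
      unfold prAllV
      exact Finset.sum_congr rfl fun x _ => by simp
    rw [h1, key Finset.univ ⟨⟨0, hk⟩, Finset.mem_univ _⟩ v] at hv
    exact lt_irrefl _ hv
  · exact ⟨hnn, hsum, hmarg, key⟩
end
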